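/- For every r ∈ ℕ with r ≥ 1, every n ∈ ℕ, and every x ∈ ℚ, the falling factorial satisfies (x)_n = Σ_{l=0}^{n} C(n,l) · D_{n−l}^{(r)}(x) · C_l^{(r)}, where D_{n−l}^{(r)}(x) are the Daehee polynomials of order r and C_l^{(r)} = C_l^{(r)}(0) are the Cauchy numbers of the first kind of order r. -/

import Mathlib

/-- `log(1+t) = ∑_{n ≥ 1} (-1)^{n+1} t^n / n` as a formal power series over `ℚ`. -/
noncomputable def logOneAdd : PowerSeries ℚ :=
  PowerSeries.mk fun n => if n = 0 then 0 else (-1 : ℚ) ^ (n + 1) / n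

/-- `e^{xt} = ∑_{n ≥ 0} x^n t^n / n!` as a formal power series over `ℚ`. -/
noncomputable def expMul (x : ℚ) : PowerSeries ℚ :=
  PowerSeries.mk fun n => x ^ n / (n.factorial : ℚ)

/-- Formal composition `f(g(t))` of power series, intended for `g` with zero
constant term (then `coeff n (g^m) = 0` for `m > n`, so the sum below is the
full composition). -/
noncomputable def psComp (f g : PowerSeries ℚ) : PowerSeries ℚ :=
  PowerSeries.mk fun n =>
    ∑ m ∈ Finset.range (n + 1),
      PowerSeries.coeff m f * PowerSeries.coeff n (g ^ m)

/-- `(1+t)^x := exp (x · log(1+t))` as a formal power series over `ℚ`. -/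
noncomputable def onePlusPow (x : ℚ) : PowerSeries ℚ :=
  psComp (PowerSeries.exp ℚ) (x • logOneAdd)

/-- The falling factorial `(x)_n = x (x-1) ⋯ (x-n+1)`. -/
def fallFact (x : ℚ) (n : ℕ) : ℚ := ∏ i ∈ Finset.range n, (x - (i : ℚ))

/-!
Since `(1+t)^x = exp (x log(1+t))` and `(1+t) · (log(1+t))' = 1`, the chain rule gives
`(1+t) F' = x F` for `F = (1+t)^x`, and comparing coefficients yields
`(n+1) F_{n+1} = (x - n) F_n`, so `F_n = (x)_n / n!`. In particular `(1+t)^0 = 1`, so the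
Cauchy generating function is `t^r / log(1+t)^r`; cancelling `log(1+t)^r` then factors
`(1+t)^x` as the product of the Cauchy and Daehee exponential generating functions, and the
identity is the `n`-th coefficient of that product.
-/

namespace PowerSeries

lemma coeff_pow_eq_zero_of_lt {R : Type*} [CommSemiring R] {g : R⟦X⟧}
    (hg : constantCoeff g = 0) {n m : ℕ} (h : n < m) : coeff n (g ^ m) = 0 :=
  coeff_of_lt_order n <|
    (Nat.cast_lt.mpr h).trans_le (le_order_pow_of_constantCoeff_eq_zero m hg)

section

variable {A : Type*} [CommRing A] [Algebra ℚ A]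

lemma one_add_X_mul_derivative_log : (1 + X) * d⁄dX A (log A) = 1 := by
  have h := congrArg (rescale (-1 : A)) (mk_one_mul_one_sub_eq_one A)
  rw [map_mul, map_sub, map_one, rescale_X, rescale_mk] at h
  rw [deriv_log, mul_comm]
  convert h using 2
  · ext n; simp
  · simp [sub_eq_add_neg]

lemma log_ne_zero [Nontrivial A] : log A ≠ 0 :=
  fun h => one_ne_zero (α := A) (by simpa [h] using coeff_one_log (A := A))

lemma one_add_X_mul_derivative_exp_subst_smul_log (a : A) :
    (1 + X) * d⁄dX A ((exp A).subst (a • log A : A⟦X⟧)) =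
      C a * (exp A).subst (a • log A : A⟦X⟧) := by
  rw [derivative_subst (HasSubst.of_constantCoeff_zero' (by simp)), derivative_exp,
    Derivation.map_smul, smul_eq_C_mul (d⁄dX A (log A))]
  linear_combination
    (C a * (exp A).subst (a • log A : A⟦X⟧)) * one_add_X_mul_derivative_log (A := A)

end

lemma succ_mul_coeff_succ_of_one_add_X_mul_derivative_eq {R : Type*} [CommRing R]
    {F : R⟦X⟧} {a : R} (hF : (1 + X) * d⁄dX R F = C a * F) (k : ℕ) :
    (k + 1) * coeff (k + 1) F = (a - k) * coeff k F := by
  have hk := congrArg (coeff k) hF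
  have hX : coeff k (X * d⁄dX R F) = k * coeff k F := by
    cases k with
    | zero => simp
    | succ j => rw [coeff_succ_X_mul, coeff_derivative]; push_cast; ring
  rw [add_mul, one_mul, map_add, hX, coeff_C_mul, coeff_derivative] at hk
  linear_combination hk

lemma factorial_mul_coeff_mul_mk_div_factorial {K : Type*} [Field K] [CharZero K]
    (a b : ℕ → K) (n : ℕ) :
    n.factorial * coeff n (mk (fun k => a k / k.factorial) * mk (fun k => b k / k.factorial)) =
      ∑ l ∈ Finset.range (n + 1), (n.choose l : K) * a l * b (n - l) := by
  rw [coeff_mul, Finset.Nat.sum_antidiagonal_eq_sum_range_succ_mk, Finset.mul_sum]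
  refine Finset.sum_congr rfl fun l hl => ?_
  rw [Nat.cast_choose K (Nat.lt_succ_iff.mp (Finset.mem_range.mp hl)), coeff_mk, coeff_mk]
  field_simp

end PowerSeries

open PowerSeries

lemma psComp_eq_subst {f g : ℚ⟦X⟧} (hg : constantCoeff g = 0) : psComp f g = f.subst g := by
  ext n
  rw [psComp, coeff_mk, coeff_subst' (HasSubst.of_constantCoeff_zero' hg)]
  refine (finsum_eq_sum_of_support_subset _ fun m hm => ?_).symm
  by_contra hmn
  exact hm (mul_eq_zero_of_right _ (coeff_pow_eq_zero_of_lt hg (by simpa using hmn)))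

lemma logOneAdd_eq_log : logOneAdd = log ℚ := by
  ext n
  simp [logOneAdd]

lemma onePlusPow_eq_subst (x : ℚ) : onePlusPow x = (exp ℚ).subst (x • log ℚ) := by
  rw [onePlusPow, logOneAdd_eq_log, psComp_eq_subst (by simp)]

lemma fallFact_succ (x : ℚ) (n : ℕ) : fallFact x (n + 1) = fallFact x n * (x - n) :=
  Finset.prod_range_succ _ _

lemma coeff_eq_fallFact_of_one_add_X_mul_derivative_eq {F : ℚ⟦X⟧} {a : ℚ}
    (hF : (1 + X) * d⁄dX ℚ F = C a * F) (n : ℕ) :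
    coeff n F = fallFact a n / n.factorial * constantCoeff F := by
  induction n with
  | zero => simp [fallFact]
  | succ k ih =>
    have hk := succ_mul_coeff_succ_of_one_add_X_mul_derivative_eq hF k
    rw [ih] at hk
    refine mul_left_cancel₀ (by positivity : (k + 1 : ℚ) ≠ 0) ?_
    rw [hk, fallFact_succ, Nat.factorial_succ]
    push_cast
    field_simp

lemma constantCoeff_onePlusPow (x : ℚ) : constantCoeff (onePlusPow x) = 1 := by
  rw [← coeff_zero_eq_constantCoeff_apply]
  simp [onePlusPow, psComp]

lemma coeff_onePlusPow (x : ℚ) (n : ℕ) :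
    coeff n (onePlusPow x) = fallFact x n / n.factorial := by
  have hODE : (1 + X) * d⁄dX ℚ (onePlusPow x) = C x * onePlusPow x := by
    rw [onePlusPow_eq_subst]
    exact one_add_X_mul_derivative_exp_subst_smul_log x
  rw [coeff_eq_fallFact_of_one_add_X_mul_derivative_eq hODE, constantCoeff_onePlusPow, mul_one]

lemma onePlusPow_zero : onePlusPow 0 = 1 := by
  ext (_ | n)
  · simp [coeff_onePlusPow, fallFact]
  · simp [coeff_onePlusPow, fallFact, Finset.prod_range_succ']

theorem fallFact_eq_sum_daehee_mul_cauchy_number_general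
    (r : ℕ) (n : ℕ) (x : ℚ) (D C : ℕ → ℚ)
    (hD : logOneAdd ^ r * onePlusPow x =
      PowerSeries.X ^ r * (PowerSeries.mk fun k => D k / (k.factorial : ℚ)))
    (hC : (PowerSeries.X : PowerSeries ℚ) ^ r * onePlusPow (0 : ℚ) =
      logOneAdd ^ r * (PowerSeries.mk fun k => C k / (k.factorial : ℚ))) :
    fallFact x n = ∑ l ∈ Finset.range (n + 1), (n.choose l : ℚ) * D (n - l) * C l := by
  rw [onePlusPow_zero, mul_one] at hC
  have hfactor : onePlusPow x =
      (mk fun k => C k / (k.factorial : ℚ)) * (mk fun k => D k / (k.factorial : ℚ)) := by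
    refine mul_left_cancel₀ (pow_ne_zero r (logOneAdd_eq_log ▸ log_ne_zero)) ?_
    rw [hD, hC, mul_assoc]
  have hn := congrArg (fun F : ℚ⟦X⟧ => (n.factorial : ℚ) * coeff n F) hfactor
  simp only [coeff_onePlusPow, factorial_mul_coeff_mul_mk_div_factorial] at hn
  rw [mul_div_cancel₀ _ (by positivity)] at hn
  rw [hn]
  exact Finset.sum_congr rfl fun l _ => mul_right_comm _ _ _

theorem fallFact_eq_sum_daehee_mul_cauchy_number
    (r : ℕ) (hr : 1 ≤ r) (n : ℕ) (x : ℚ) (D C : ℕ → ℚ)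
    (hD : logOneAdd ^ r * onePlusPow x =
      PowerSeries.X ^ r * (PowerSeries.mk fun k => D k / (k.factorial : ℚ)))
    (hC : (PowerSeries.X : PowerSeries ℚ) ^ r * onePlusPow (0 : ℚ) =
      logOneAdd ^ r * (PowerSeries.mk fun k => C k / (k.factorial : ℚ))) :
    fallFact x n = ∑ l ∈ Finset.range (n + 1), (n.choose l : ℚ) * D (n - l) * C l :=
  fallFact_eq_sum_daehee_mul_cauchy_number_general r n x D C hD hC
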